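/- arXiv:1711.01072 — 2 statements merged into one kernel-verified Lean document; each statement's English description precedes it below -/
import Mathlib

section
/- For β > 0, ε > 0 and every n ≥ 1, the n-th β-derivative of b₊(β,ε) = -1/(e^{-βε} - 1) equals (-ε)^n · Σ_{k=1}^{n} A(n,k-1) · b₊(β,ε)^{n+1-k} · b₋(β,ε)^{k}, where A(n,j) denotes the Eulerian numbers and b₋(β,ε) = 1/(e^{βε} - 1). -/
/-!
Since `b₊ = 1 + b₋` and `∂_β b₋ = -ε b₋ b₊ = ∂_β b₊`, differentiating a monomial `b₊ᵃ b₋ᶜ` in `β`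
is `-ε` times the operator `x y (∂ₓ + ∂_y)` applied to `xᵃ yᶜ` at `(x, y) = (b₊, b₋)`.
The homogenized Eulerian polynomials `Eₙ(x, y) = ∑_{σ ∈ Sₙ} x^(n - des σ) y^(des σ + 1)` satisfy
`Eₙ₊₁ = x y (∂ₓ + ∂_y) Eₙ`: inserting the largest value into `σ` keeps the number of descents in
the `des σ + 1` gaps at the end or right after a descent, and raises it by one in the other
`n - des σ` gaps. Hence the `n`-th derivative of `b₋` is `(-ε)ⁿ Eₙ(b₊, b₋)`, and so is that of `b₊`
for `n ≥ 1`.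
-/

/-- Eulerian number `A n j`: the number of permutations of `{1,…,n}` with exactly `j` descents. -/
def eulerianNumber (n j : ℕ) : ℕ :=
  (Finset.univ.filter fun σ : Equiv.Perm (Fin n) =>
    (Finset.univ.filter fun i : Fin n =>
      ∃ h : (i : ℕ) + 1 < n, σ ⟨(i : ℕ) + 1, h⟩ < σ i).card = j).card

open Finset Equiv

theorem Fin.val_succAbove {n : ℕ} (p : Fin (n + 1)) (i : Fin n) :
    (p.succAbove i : ℕ) = if (i : ℕ) < p then (i : ℕ) else (i : ℕ) + 1 := by
  split_ifs with h
  · rw [Fin.succAbove_of_castSucc_lt _ _ (by simpa [Fin.lt_def] using h), Fin.val_castSucc]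
  · rw [Fin.succAbove_of_le_castSucc _ _ (by simp [Fin.le_def]; omega), Fin.val_succ]

namespace Equiv.Perm

variable {n : ℕ}

def descents (σ : Perm (Fin n)) : Finset (Fin n) :=
  {i | ∃ h : (i : ℕ) + 1 < n, σ ⟨(i : ℕ) + 1, h⟩ < σ i}

theorem mem_descents {σ : Perm (Fin n)} {i : Fin n} :
    i ∈ descents σ ↔ ∃ h : (i : ℕ) + 1 < n, σ ⟨(i : ℕ) + 1, h⟩ < σ i := by
  simp [descents]

theorem eulerianNumber_eq_card (n j : ℕ) :
    eulerianNumber n j = #{σ : Perm (Fin n) | #(descents σ) = j} := rfl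

theorem card_descents_lt (hn : n ≠ 0) (σ : Perm (Fin n)) : #(descents σ) < n := by
  have hlast : (⟨n - 1, by omega⟩ : Fin n) ∉ descents σ := by
    simp only [mem_descents, not_exists]
    intro h
    omega
  have hsub : descents σ ⊂ univ := ssubset_univ_iff.2 fun h => hlast (h ▸ mem_univ _)
  simpa using card_lt_card hsub

/-- The permutation of `Fin (n + 1)` obtained from `σ` by inserting the maximal value `n`
at position `p`. -/
def insertMax (σ : Perm (Fin n)) (p : Fin (n + 1)) : Perm (Fin (n + 1)) :=
  ((finSuccEquiv' p).trans σ.optionCongr).trans (finSuccEquiv' (Fin.last n)).symm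

@[simp]
theorem insertMax_apply_self (σ : Perm (Fin n)) (p : Fin (n + 1)) :
    insertMax σ p p = Fin.last n := by
  simp [insertMax]

@[simp]
theorem insertMax_apply_succAbove (σ : Perm (Fin n)) (p : Fin (n + 1)) (i : Fin n) :
    insertMax σ p (p.succAbove i) = (σ i).castSucc := by
  simp [insertMax, finSuccEquiv'_succAbove, Fin.succAbove_last]

theorem insertMax_injective : Function.Injective (Function.uncurry (insertMax (n := n))) := by
  rintro ⟨σ, p⟩ ⟨σ', p'⟩ h
  simp only [Function.uncurry_apply_pair] at h
  obtain rfl : p = p' := (insertMax σ p).injective <| by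
    rw [insertMax_apply_self, h, insertMax_apply_self]
  obtain rfl : σ = σ' := Equiv.ext fun i => Fin.castSucc_injective _ <| by
    rw [← insertMax_apply_succAbove, h, insertMax_apply_succAbove]
  rfl

theorem insertMax_bijective : Function.Bijective (Function.uncurry (insertMax (n := n))) := by
  refine (Fintype.bijective_iff_injective_and_card _).2 ⟨insertMax_injective, ?_⟩
  simp [Fintype.card_perm, Nat.factorial_succ, mul_comm]

theorem mem_descents_insertMax_self (σ : Perm (Fin n)) (p : Fin (n + 1)) :
    p ∈ descents (insertMax σ p) ↔ (p : ℕ) < n := by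
  refine mem_descents.trans ⟨fun ⟨h, _⟩ => by omega, fun hp => ⟨by omega, ?_⟩⟩
  obtain ⟨i, hi⟩ := Fin.exists_succAbove_eq (x := ⟨p + 1, by omega⟩) (y := p)
    (by simp [Fin.ext_iff])
  rw [← hi, insertMax_apply_succAbove, insertMax_apply_self]
  exact Fin.castSucc_lt_last _

theorem mem_descents_insertMax_succAbove (σ : Perm (Fin n)) (p : Fin (n + 1)) (i : Fin n) :
    p.succAbove i ∈ descents (insertMax σ p) ↔ i ∈ descents σ ∧ i.succ ≠ p := by
  have hv := Fin.val_succAbove p i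
  simp only [mem_descents, ne_eq, Fin.ext_iff, Fin.val_succ]
  by_cases hp : (i : ℕ) + 1 = p
  · simp only [hp, not_true_eq_false, and_false, iff_false, not_exists]
    intro h
    have hnext : (⟨(p.succAbove i : ℕ) + 1, h⟩ : Fin (n + 1)) = p :=
      Fin.ext (by dsimp only; split_ifs at hv <;> omega)
    rw [hnext, insertMax_apply_self, insertMax_apply_succAbove]
    exact not_lt.2 (Fin.le_last _)
  · have hnext : ∀ (h : (p.succAbove i : ℕ) + 1 < n + 1) (hi : (i : ℕ) + 1 < n),
        (⟨(p.succAbove i : ℕ) + 1, h⟩ : Fin (n + 1)) = p.succAbove ⟨i + 1, hi⟩ := fun h hi =>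
      Fin.ext (by simp only [Fin.val_succAbove]; split_ifs <;> omega)
    simp only [hp, not_false_eq_true, and_true]
    constructor
    · rintro ⟨h, hlt⟩
      have hi : (i : ℕ) + 1 < n := by split_ifs at hv <;> omega
      rw [hnext h hi, insertMax_apply_succAbove, insertMax_apply_succAbove,
        Fin.castSucc_lt_castSucc_iff] at hlt
      exact ⟨hi, hlt⟩
    · rintro ⟨hi, hlt⟩
      have h : (p.succAbove i : ℕ) + 1 < n + 1 := by split_ifs at hv <;> omega
      refine ⟨h, ?_⟩
      rwa [hnext h hi, insertMax_apply_succAbove, insertMax_apply_succAbove,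
        Fin.castSucc_lt_castSucc_iff]

/-- The positions at which inserting the maximal value creates no new descent: the end, and
right after a descent. -/
def gaps (σ : Perm (Fin n)) : Finset (Fin (n + 1)) :=
  insert (Fin.last n) ((descents σ).map (Fin.succEmb n))

theorem last_notMem_map_descents (σ : Perm (Fin n)) :
    Fin.last n ∉ (descents σ).map (Fin.succEmb n) := by
  simp only [mem_map, Fin.coe_succEmb, not_exists, not_and, mem_descents]
  rintro i ⟨h, -⟩ hi
  simp [Fin.ext_iff] at hi
  omega

theorem card_gaps (σ : Perm (Fin n)) : #(gaps σ) = #(descents σ) + 1 := by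
  rw [gaps, card_insert_of_notMem (last_notMem_map_descents σ), card_map]

theorem card_descents_insertMax_add (σ : Perm (Fin n)) (p : Fin (n + 1)) :
    #(descents (insertMax σ p)) + (if p ∈ gaps σ then 1 else 0) = #(descents σ) + 1 := by
  have hτ : #(descents (insertMax σ p))
      = (if (p : ℕ) < n then 1 else 0) + #{i ∈ descents σ | i.succ ≠ p} := by
    rw [card_eq_sum_ite (subset_univ _), Fin.sum_univ_succAbove _ p]
    simp only [mem_descents_insertMax_self, mem_descents_insertMax_succAbove, ne_eq]
    rw [← card_filter, ← filter_filter, filter_univ_mem]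
  have hσ : #{i ∈ descents σ | i.succ ≠ p}
      + (if p ∈ (descents σ).map (Fin.succEmb n) then 1 else 0) = #(descents σ) := by
    conv_rhs => rw [← card_filter_add_card_filter_not (s := descents σ) (fun i => i.succ ≠ p)]
    congr 1
    have hfib : #{i ∈ descents σ | ¬i.succ ≠ p}
        = #((descents σ).map (Fin.succEmb n) |>.filter (· = p)) := by
      rw [filter_map, card_map]
      congr
      ext
      simp
    rw [hfib, filter_eq']
    split_ifs <;> rfl
  by_cases hp : p = Fin.last n
  · subst hp
    rw [if_neg (last_notMem_map_descents σ)] at hσ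
    simp only [hτ, gaps, mem_insert_self, if_true, Fin.val_last, lt_irrefl, if_false]
    omega
  · simp only [hτ, gaps, mem_insert, hp, false_or, Fin.val_lt_last hp, if_true]
    omega

theorem sum_insertMax {M : Type*} [AddCommMonoid M] (σ : Perm (Fin n)) (G : ℕ → M) :
    ∑ p, G #(descents (insertMax σ p))
      = (#(descents σ) + 1) • G #(descents σ) + (n - #(descents σ)) • G (#(descents σ) + 1) := by
  have hG : ∀ p, G #(descents (insertMax σ p))
      = if p ∈ gaps σ then G #(descents σ) else G (#(descents σ) + 1) := fun p => by
    have := card_descents_insertMax_add σ p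
    split_ifs at this ⊢
    · rw [show #(descents (insertMax σ p)) = #(descents σ) by omega]
    · rw [show #(descents (insertMax σ p)) = #(descents σ) + 1 by omega]
  rw [sum_congr rfl fun p _ => hG p, sum_ite, sum_const, sum_const, filter_univ_mem, card_gaps,
    ← compl_filter, filter_univ_mem, card_compl, Fintype.card_fin, card_gaps,
    Nat.add_sub_add_right]

theorem sum_perm_succ {M : Type*} [AddCommMonoid M] (G : ℕ → M) :
    ∑ τ : Perm (Fin (n + 1)), G #(descents τ) = ∑ σ : Perm (Fin n),
      ((#(descents σ) + 1) • G #(descents σ) + (n - #(descents σ)) • G (#(descents σ) + 1)) := by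
  rw [← insertMax_bijective.sum_comp, Fintype.sum_prod_type]
  exact sum_congr rfl fun σ _ => sum_insertMax σ G

end Equiv.Perm

section HomEulerian

open Equiv.Perm

variable {R : Type*} [CommSemiring R]

def homEulerian (n : ℕ) (x y : R) : R :=
  ∑ σ : Perm (Fin n), x ^ (n - #(descents σ)) * y ^ (#(descents σ) + 1)

theorem homEulerian_succ (n : ℕ) (x y : R) :
    homEulerian (n + 1) x y = ∑ σ : Perm (Fin n),
      ((#(descents σ) + 1) • (x ^ (n - #(descents σ) + 1) * y ^ (#(descents σ) + 1))
        + (n - #(descents σ)) • (x ^ (n - #(descents σ)) * y ^ (#(descents σ) + 2))) := by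
  rw [homEulerian, sum_perm_succ (fun d => x ^ (n + 1 - d) * y ^ (d + 1))]
  refine sum_congr rfl fun σ _ => ?_
  have hd : #(descents σ) ≤ n := by simpa using card_le_univ (descents σ)
  rw [Nat.add_sub_add_right, Nat.sub_add_comm hd]

theorem homEulerian_eq_sum_eulerianNumber {n : ℕ} (hn : n ≠ 0) (x y : R) :
    homEulerian n x y
      = ∑ k ∈ Icc 1 n, (eulerianNumber n (k - 1) : R) * x ^ (n + 1 - k) * y ^ k := by
  have hmaps : ∀ σ ∈ (univ : Finset (Perm (Fin n))), #(descents σ) + 1 ∈ Icc 1 n := fun σ _ => by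
    have := card_descents_lt hn σ
    simp only [mem_Icc]
    omega
  have hfib := sum_fiberwise_of_maps_to' hmaps fun k => x ^ (n + 1 - k) * y ^ k
  simp only [Nat.add_sub_add_right] at hfib
  rw [homEulerian, ← hfib]
  refine sum_congr rfl fun k hk => ?_
  have hk1 : 1 ≤ k := (mem_Icc.1 hk).1
  rw [sum_const, nsmul_eq_mul, mul_assoc, eulerianNumber_eq_card]
  congr 3
  ext σ
  simp only [mem_filter, mem_univ, true_and]
  omega

end HomEulerian

theorem HasDerivAt.fun_pow_of_self_mul {f : ℝ → ℝ} {g x : ℝ} (hf : HasDerivAt f (f x * g) x)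
    (k : ℕ) : HasDerivAt (fun t => f t ^ k) (k * f x ^ k * g) x := by
  refine (hf.fun_pow k).congr_deriv ?_
  cases k <;> simp [pow_succ]
  ring

section BoseFactors

open Real Filter Topology

/-- `bMinus ε β = b₋(β, ε)` and `bPlus ε β = b₊(β, ε)`; `ε` comes first so that `bPlus ε` is the
function of `β` that is differentiated. -/
noncomputable def bMinus (ε β : ℝ) : ℝ := 1 / (exp (β * ε) - 1)

noncomputable def bPlus (ε β : ℝ) : ℝ := -1 / (exp (-(β * ε)) - 1)

variable {ε β : ℝ}

theorem Real.exp_sub_one_ne_zero {t : ℝ} (ht : t ≠ 0) : exp t - 1 ≠ 0 :=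
  sub_ne_zero.2 (mt (exp_eq_one_iff t).1 ht)

theorem bPlus_eq_one_add_bMinus (h : β * ε ≠ 0) : bPlus ε β = 1 + bMinus ε β := by
  have hinv : (exp (β * ε))⁻¹ - 1 ≠ 0 := by
    simpa [exp_neg] using exp_sub_one_ne_zero (neg_ne_zero.2 h)
  have := exp_sub_one_ne_zero h
  have : 1 - exp (β * ε) ≠ 0 := by rwa [← neg_sub, neg_ne_zero]
  rw [bPlus, bMinus, exp_neg]
  field_simp
  ring

theorem isOpen_setOf_mul_ne_zero (ε : ℝ) : IsOpen {β : ℝ | β * ε ≠ 0} :=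
  isOpen_ne_fun (by fun_prop) continuous_const

theorem bPlus_eventuallyEq (h : β * ε ≠ 0) : bPlus ε =ᶠ[𝓝 β] fun t => 1 + bMinus ε t :=
  eventually_of_mem ((isOpen_setOf_mul_ne_zero ε).mem_nhds h) fun _ ↦ bPlus_eq_one_add_bMinus

theorem hasDerivAt_bMinus (h : β * ε ≠ 0) :
    HasDerivAt (bMinus ε) (bMinus ε β * (-ε * bPlus ε β)) β := by
  have hne := exp_sub_one_ne_zero h
  have hexp : HasDerivAt (fun t => exp (t * ε) - 1) (exp (β * ε) * ε) β := by
    simpa using (((hasDerivAt_id β).mul_const ε).exp).sub_const 1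
  refine ((hasDerivAt_const β 1).div hexp hne).congr_deriv ?_
  rw [bPlus_eq_one_add_bMinus h, bMinus]
  field_simp
  ring

theorem hasDerivAt_bPlus (h : β * ε ≠ 0) :
    HasDerivAt (bPlus ε) (bPlus ε β * (-ε * bMinus ε β)) β :=
  (((hasDerivAt_bMinus h).const_add 1).congr_of_eventuallyEq (bPlus_eventuallyEq h)).congr_deriv
    (by ring)

theorem hasDerivAt_bPlus_pow_mul_bMinus_pow (h : β * ε ≠ 0) (a c : ℕ) :
    HasDerivAt (fun t => bPlus ε t ^ a * bMinus ε t ^ c)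
      (-ε * (c * (bPlus ε β ^ (a + 1) * bMinus ε β ^ c)
        + a * (bPlus ε β ^ a * bMinus ε β ^ (c + 1)))) β := by
  refine (((hasDerivAt_bPlus h).fun_pow_of_self_mul a).mul
    ((hasDerivAt_bMinus h).fun_pow_of_self_mul c)).congr_deriv ?_
  ring

theorem hasDerivAt_homEulerian (h : β * ε ≠ 0) (n : ℕ) :
    HasDerivAt (fun t => homEulerian n (bPlus ε t) (bMinus ε t))
      (-ε * homEulerian (n + 1) (bPlus ε β) (bMinus ε β)) β := by
  rw [homEulerian_succ, mul_sum]
  refine HasDerivAt.fun_sum fun σ _ => ?_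
  exact (hasDerivAt_bPlus_pow_mul_bMinus_pow h _ _).congr_deriv
    (by push_cast [nsmul_eq_mul]; ring)

theorem eqOn_iteratedDeriv_bMinus (ε : ℝ) (n : ℕ) :
    Set.EqOn (iteratedDeriv n (bMinus ε))
      (fun β => (-ε) ^ n * homEulerian n (bPlus ε β) (bMinus ε β)) {β | β * ε ≠ 0} := by
  induction n with
  | zero => intro β _; simp [homEulerian, eq_empty_of_isEmpty]
  | succ n ih =>
    intro β h
    rw [iteratedDeriv_succ,
      (ih.eventuallyEq_of_mem ((isOpen_setOf_mul_ne_zero ε).mem_nhds h)).deriv_eq,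
      ((hasDerivAt_homEulerian h n).const_mul ((-ε) ^ n)).deriv]
    ring

theorem iteratedDeriv_bPlus {n : ℕ} (hn : n ≠ 0) (h : β * ε ≠ 0) :
    iteratedDeriv n (bPlus ε) β = (-ε) ^ n * homEulerian n (bPlus ε β) (bMinus ε β) := by
  rw [(bPlus_eventuallyEq h).iteratedDeriv_eq, iteratedDeriv_const_add (Nat.pos_of_ne_zero hn),
    eqOn_iteratedDeriv_bMinus ε n h]

end BoseFactors

theorem stmt_6 (β ε : ℝ) (hβ : 0 < β) (hε : 0 < ε) (n : ℕ) (hn : 1 ≤ n) :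
    iteratedDeriv n (fun b : ℝ => -1 / (Real.exp (-(b * ε)) - 1)) β =
      (-ε) ^ n * ∑ k ∈ Finset.Icc 1 n,
        (eulerianNumber n (k - 1) : ℝ) *
          (-1 / (Real.exp (-(β * ε)) - 1)) ^ (n + 1 - k) *
          (1 / (Real.exp (β * ε) - 1)) ^ k := by
  have hn' : n ≠ 0 := by omega
  show iteratedDeriv n (bPlus ε) β = (-ε) ^ n * ∑ k ∈ Icc 1 n,
    (eulerianNumber n (k - 1) : ℝ) * bPlus ε β ^ (n + 1 - k) * bMinus ε β ^ k
  rw [iteratedDeriv_bPlus hn' (mul_pos hβ hε).ne', homEulerian_eq_sum_eulerianNumber hn']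
end

section
/- Let T : ℝ → ℂ be continuous such that for all t ≥ 0, T(t) = (1/√(2ε_λ)) · (A₊ e^{-iε_λ t} + A₋ e^{iε_λ t}) with A₊, A₋ ∈ ℂ and ε_λ > 0. Then for any t₁, t₂ ∈ ℝ, lim_{t→+∞} (1/t) ∫₀ᵗ T(t₁+τ) · T(t₂+τ) dτ = (A₊A₋/(2ε_λ)) · (e^{-iε_λ(t₁-t₂)} + e^{iε_λ(t₁-t₂)}). -/
/-!
For τ ≥ max (-t₁) (-t₂) both arguments of T are nonnegative, so the integrand is the product of
two plane waves. That product is the constant A₊A₋(e^{-iε(t₁-t₂)} + e^{iε(t₁-t₂)})/(2ε) plus the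
terms A±² e^{∓iε(t₁+t₂)} e^{∓2iετ}/(2ε), whose primitives stay bounded because ε > 0, so their
Cesàro means vanish. Changing the integrand on the bounded interval [0, max (-t₁) (-t₂)] only
perturbs the mean by O(1/t).
-/

open Complex MeasureTheory Filter

noncomputable def cesaroMean (f : ℝ → ℂ) (t : ℝ) : ℂ := (1 / (t : ℂ)) * ∫ τ in (0:ℝ)..t, f τ

theorem tendsto_cesaroMean_const (L : ℂ) : Tendsto (cesaroMean fun _ => L) atTop (nhds L) := by
  refine tendsto_const_nhds.congr' ?_
  filter_upwards [eventually_gt_atTop 0] with t ht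
  have ht' : (t : ℂ) ≠ 0 := ofReal_ne_zero.2 ht.ne'
  simp only [cesaroMean, intervalIntegral.integral_const, sub_zero, real_smul]
  field_simp

theorem tendsto_cesaroMean_zero_of_norm_integral_le {f : ℝ → ℂ} {M : ℝ}
    (hM : ∀ᶠ t in atTop, ‖∫ τ in (0:ℝ)..t, f τ‖ ≤ M) :
    Tendsto (cesaroMean f) atTop (nhds 0) := by
  refine squeeze_zero_norm' ?_ (tendsto_const_nhds (x := M) |>.div_atTop tendsto_id)
  filter_upwards [hM, eventually_gt_atTop 0] with t hMt ht
  rw [cesaroMean, norm_mul, norm_div, norm_one, norm_real, Real.norm_of_nonneg ht.le,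
    one_div_mul_eq_div, id]
  gcongr

theorem tendsto_cesaroMean_const_mul {f : ℝ → ℂ} {L : ℂ} (c : ℂ)
    (hf : Tendsto (cesaroMean f) atTop (nhds L)) :
    Tendsto (cesaroMean fun τ => c * f τ) atTop (nhds (c * L)) := by
  refine (hf.const_mul c).congr fun t => ?_
  simp only [cesaroMean, intervalIntegral.integral_const_mul]
  ring

theorem tendsto_cesaroMean_add {f g : ℝ → ℂ} {L M : ℂ} (hf : Continuous f) (hg : Continuous g)
    (hfL : Tendsto (cesaroMean f) atTop (nhds L)) (hgM : Tendsto (cesaroMean g) atTop (nhds M)) :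
    Tendsto (cesaroMean fun τ => f τ + g τ) atTop (nhds (L + M)) := by
  refine (hfL.add hgM).congr fun t => ?_
  simp only [cesaroMean, intervalIntegral.integral_add (hf.intervalIntegrable 0 t)
    (hg.intervalIntegrable 0 t)]
  ring

theorem tendsto_cesaroMean_exp_mul {k : ℂ} (hk : k ≠ 0) (hre : k.re ≤ 0) :
    Tendsto (cesaroMean fun τ => exp (k * τ)) atTop (nhds 0) := by
  refine tendsto_cesaroMean_zero_of_norm_integral_le (M := 2 / ‖k‖) ?_
  filter_upwards [eventually_ge_atTop 0] with t ht
  have hexp : ‖exp (k * t)‖ ≤ 1 := by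
    rw [norm_exp, Real.exp_le_one_iff, re_mul_ofReal]
    exact mul_nonpos_of_nonpos_of_nonneg hre ht
  rw [integral_exp_mul_complex hk, norm_div, ofReal_zero, mul_zero, exp_zero]
  gcongr
  calc ‖exp (k * t) - 1‖ ≤ ‖exp (k * t)‖ + ‖(1 : ℂ)‖ := norm_sub_le _ _
    _ ≤ 2 := by rw [norm_one]; linarith

theorem tendsto_cesaroMean_congr_Ici {f g : ℝ → ℂ} {L : ℂ} {c : ℝ} (hf : Continuous f)
    (hg : Continuous g) (hfg : Set.EqOn f g (Set.Ici c))
    (hgL : Tendsto (cesaroMean g) atTop (nhds L)) :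
    Tendsto (cesaroMean f) atTop (nhds L) := by
  have hdiff : Tendsto (cesaroMean fun τ => f τ - g τ) atTop (nhds 0) := by
    refine tendsto_cesaroMean_zero_of_norm_integral_le (M := ‖∫ τ in (0:ℝ)..c, f τ - g τ‖) ?_
    filter_upwards [eventually_ge_atTop c] with t ht
    have hi : ∀ a b, IntervalIntegrable (fun τ => f τ - g τ) volume a b :=
      (hf.sub hg).intervalIntegrable
    have htail : ∫ τ in c..t, f τ - g τ = 0 := by
      refine intervalIntegral.integral_zero_ae (Eventually.of_forall fun τ hτ => ?_)
      rw [Set.uIoc_of_le ht] at hτ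
      exact sub_eq_zero.2 (hfg (le_of_lt hτ.1))
    rw [← intervalIntegral.integral_add_adjacent_intervals (hi 0 c) (hi c t), htail, add_zero]
  simpa using tendsto_cesaroMean_add hg (hf.sub hg) hgL hdiff

noncomputable def planeWave (ε : ℝ) (Ap Am : ℂ) (t : ℝ) : ℂ :=
  (1 / (Real.sqrt (2 * ε) : ℂ)) * (Ap * exp (-I * ε * t) + Am * exp (I * ε * t))

theorem planeWave_add_mul_planeWave_add {ε : ℝ} (hε : 0 ≤ ε) (Ap Am : ℂ) (s₁ s₂ τ : ℝ) :
    planeWave ε Ap Am (s₁ + τ) * planeWave ε Ap Am (s₂ + τ) =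
      Ap * Am / (2 * ε) * (exp (-I * ε * (s₁ - s₂)) + exp (I * ε * (s₁ - s₂)))
        + Ap ^ 2 * exp (-I * ε * (s₁ + s₂)) / (2 * ε) * exp (-2 * I * ε * τ)
        + Am ^ 2 * exp (I * ε * (s₁ + s₂)) / (2 * ε) * exp (2 * I * ε * τ) := by
  have hsqrt : (1 / (Real.sqrt (2 * ε) : ℂ)) * (1 / (Real.sqrt (2 * ε) : ℂ)) = 1 / (2 * ε) := by
    rw [div_mul_div_comm, one_mul, ← ofReal_mul, Real.mul_self_sqrt (by positivity)]
    push_cast; rfl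
  have hpp : exp (-I * ε * ↑(s₁ + τ)) * exp (-I * ε * ↑(s₂ + τ)) =
      exp (-I * ε * (s₁ + s₂)) * exp (-2 * I * ε * τ) := by
    rw [← exp_add, ← exp_add]; push_cast; ring_nf
  have hpm : exp (-I * ε * ↑(s₁ + τ)) * exp (I * ε * ↑(s₂ + τ)) = exp (-I * ε * (s₁ - s₂)) := by
    rw [← exp_add]; push_cast; ring_nf
  have hmp : exp (I * ε * ↑(s₁ + τ)) * exp (-I * ε * ↑(s₂ + τ)) = exp (I * ε * (s₁ - s₂)) := by
    rw [← exp_add]; push_cast; ring_nf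
  have hmm : exp (I * ε * ↑(s₁ + τ)) * exp (I * ε * ↑(s₂ + τ)) =
      exp (I * ε * (s₁ + s₂)) * exp (2 * I * ε * τ) := by
    rw [← exp_add, ← exp_add]; push_cast; ring_nf
  rw [planeWave, planeWave, mul_mul_mul_comm, hsqrt]
  linear_combination (Ap ^ 2 * hpp + Ap * Am * (hpm + hmp) + Am ^ 2 * hmm) / (2 * ε)

@[fun_prop]
theorem continuous_planeWave (ε : ℝ) (Ap Am : ℂ) : Continuous (planeWave ε Ap Am) := by
  unfold planeWave; fun_prop

theorem tendsto_cesaroMean_planeWave_mul {ε : ℝ} (hε : 0 < ε) (Ap Am : ℂ) (s₁ s₂ : ℝ) :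
    Tendsto (cesaroMean fun τ => planeWave ε Ap Am (s₁ + τ) * planeWave ε Ap Am (s₂ + τ)) atTop
      (nhds (Ap * Am / (2 * ε) * (exp (-I * ε * (s₁ - s₂)) + exp (I * ε * (s₁ - s₂))))) := by
  set L := Ap * Am / (2 * ε) * (exp (-I * ε * (s₁ - s₂)) + exp (I * ε * (s₁ - s₂)))
  set P := Ap ^ 2 * exp (-I * ε * (s₁ + s₂)) / (2 * ε)
  set Q := Am ^ 2 * exp (I * ε * (s₁ + s₂)) / (2 * ε)
  have hk (c : ℂ) (hc : c ≠ 0) : c * I * ε ≠ 0 := by simp [hc, hε.ne']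
  have hP := tendsto_cesaroMean_const_mul P
    (tendsto_cesaroMean_exp_mul (hk (-2) (by norm_num)) (by simp))
  have hQ := tendsto_cesaroMean_const_mul Q
    (tendsto_cesaroMean_exp_mul (hk 2 (by norm_num)) (by simp))
  have hsum := tendsto_cesaroMean_add (by fun_prop) (by fun_prop)
    (tendsto_cesaroMean_add (by fun_prop) (by fun_prop) (tendsto_cesaroMean_const L) hP) hQ
  convert hsum using 2
  · ext τ
    exact planeWave_add_mul_planeWave_add hε.le Ap Am s₁ s₂ τ
  · simp

theorem stmt_12 (εl : ℝ) (hεl : 0 < εl) (Ap Am : ℂ) (T : ℝ → ℂ)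
    (hT : Continuous T)
    (hform : ∀ t : ℝ, 0 ≤ t →
      T t = (1 / (Real.sqrt (2 * εl) : ℂ)) *
        (Ap * Complex.exp (-Complex.I * εl * t) + Am * Complex.exp (Complex.I * εl * t)))
    (t₁ t₂ : ℝ) :
    Tendsto
      (fun t : ℝ => (1 / (t : ℂ)) * ∫ τ in (0:ℝ)..t, T (t₁ + τ) * T (t₂ + τ))
      atTop
      (nhds ((Ap * Am / (2 * εl : ℂ)) *
        (Complex.exp (-Complex.I * εl * (t₁ - t₂)) +
         Complex.exp (Complex.I * εl * (t₁ - t₂))))) := by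
  have hwave : Set.EqOn (fun τ => T (t₁ + τ) * T (t₂ + τ))
      (fun τ => planeWave εl Ap Am (t₁ + τ) * planeWave εl Ap Am (t₂ + τ))
      (Set.Ici (max (-t₁) (-t₂))) := by
    intro τ hτ
    rw [Set.mem_Ici, max_le_iff] at hτ
    simp only [hform (t₁ + τ) (by linarith), hform (t₂ + τ) (by linarith), planeWave]
  exact tendsto_cesaroMean_congr_Ici (by fun_prop) (by fun_prop) hwave
    (tendsto_cesaroMean_planeWave_mul hεl Ap Am t₁ t₂)
end
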